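/- arXiv:1507.00710 — 6 statements merged into one kernel-verified Lean document; each statement's English description precedes it below -/
import Mathlib

section
/- Let H be a symmetric positive definite matrix and M a symmetric matrix satisfying (1−τ)H⁻¹ ⪯ M ⪯ (1+τ)H⁻¹ for some τ ≥ 0. Then the operator norm of (I − MH) with respect to the norm ‖·‖_H is at most τ, i.e., for all y, ‖(I − MH)y‖_H ≤ τ‖y‖_H. -/
/-!
Write `T = I - MH` and `Q(x) = xᵀHx`. Then `HT = H - HMH` is symmetric, i.e. `T` is self-adjoint
for `Q`, and substituting `z = Hx` turns the Loewner sandwich into `|xᵀ(HT)x| ≤ τ Q(x)`.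
For a `Q`-self-adjoint operator this numerical-range bound already bounds the operator norm:
polarizing the form `xᵀ(HT)x` at `Tx ± τx` gives `Q(Tx) ≤ τ² Q(x)`.
-/

open Matrix

namespace Matrix

variable {ι : Type*} [Fintype ι]

theorem dotProduct_mulVec_transpose_mul_mul (A B : Matrix ι ι ℝ) (v : ι → ℝ) :
    v ⬝ᵥ (Aᵀ * B * A) *ᵥ v = A *ᵥ v ⬝ᵥ B *ᵥ (A *ᵥ v) := by
  rw [← mulVec_mulVec, ← mulVec_mulVec, dotProduct_mulVec, vecMul_transpose]

theorem IsSymm.dotProduct_mulVec_comm {K : Matrix ι ι ℝ} (hK : K.IsSymm) (u v : ι → ℝ) :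
    u ⬝ᵥ K *ᵥ v = v ⬝ᵥ K *ᵥ u := by
  rw [dotProduct_mulVec, ← mulVec_transpose, hK.eq, dotProduct_comm]

theorem abs_sub_dotProduct_mulVec_le {A M : Matrix ι ι ℝ} {τ : ℝ}
    (hlow : (M - (1 - τ) • A).PosSemidef) (hup : ((1 + τ) • A - M).PosSemidef) (z : ι → ℝ) :
    |z ⬝ᵥ A *ᵥ z - z ⬝ᵥ M *ᵥ z| ≤ τ * (z ⬝ᵥ A *ᵥ z) := by
  have h₁ := hlow.dotProduct_mulVec_nonneg z
  have h₂ := hup.dotProduct_mulVec_nonneg z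
  simp only [star_trivial, sub_mulVec, smul_mulVec, dotProduct_sub, dotProduct_smul,
    smul_eq_mul] at h₁ h₂
  exact abs_le.mpr ⟨by linarith, by linarith⟩

theorem mulVec_dotProduct_mulVec_le_of_abs_le {G T : Matrix ι ι ℝ} {τ : ℝ}
    (hGT : (G * T).IsSymm) (hτ : 0 ≤ τ)
    (h : ∀ x, |x ⬝ᵥ (G * T) *ᵥ x| ≤ τ * (x ⬝ᵥ G *ᵥ x)) (x : ι → ℝ) :
    T *ᵥ x ⬝ᵥ G *ᵥ (T *ᵥ x) ≤ τ ^ 2 * (x ⬝ᵥ G *ᵥ x) := by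
  set u := T *ᵥ x
  have hcross : u ⬝ᵥ (G * T) *ᵥ x = u ⬝ᵥ G *ᵥ u := by rw [← mulVec_mulVec]
  have hswap := hGT.dotProduct_mulVec_comm x u
  have key (t : ℝ) :
      4 * t * (u ⬝ᵥ G *ᵥ u) ≤ τ * (2 * (u ⬝ᵥ G *ᵥ u) + 2 * t ^ 2 * (x ⬝ᵥ G *ᵥ x)) := by
    have hp := abs_le.mp (h (u + t • x))
    have hm := abs_le.mp (h (u - t • x))
    simp only [mulVec_add, mulVec_sub, mulVec_smul, dotProduct_add, dotProduct_sub,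
      add_dotProduct, sub_dotProduct, dotProduct_smul, smul_dotProduct, smul_eq_mul,
      hcross, hswap] at hp hm
    nlinarith [hp.2, hm.1]
  rcases hτ.eq_or_lt with rfl | hpos
  · linarith [key 1]
  · nlinarith [key τ]

end Matrix

/-- If `H` is symmetric positive definite and `M` is symmetric with
`(1−τ)H⁻¹ ⪯ M ⪯ (1+τ)H⁻¹` for some `τ ≥ 0`, then for all `y`,
`‖(I − MH)y‖_H ≤ τ ‖y‖_H`, where `‖x‖_H = √(xᵀ H x)`. -/
theorem opNorm_id_sub_MH_le (n : ℕ) (H M : Matrix (Fin n) (Fin n) ℝ)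
    (hHsymm : H.IsSymm) (hH : H.PosDef) (hMsymm : M.IsSymm)
    (τ : ℝ) (hτ : 0 ≤ τ)
    (hlow : (M - (1 - τ) • H⁻¹).PosSemidef)
    (hup : ((1 + τ) • H⁻¹ - M).PosSemidef) :
    ∀ y : Fin n → ℝ,
      Real.sqrt ((((1 : Matrix (Fin n) (Fin n) ℝ) - M * H).mulVec y) ⬝ᵥ
          H.mulVec (((1 : Matrix (Fin n) (Fin n) ℝ) - M * H).mulVec y)) ≤
        τ * Real.sqrt (y ⬝ᵥ H.mulVec y) := by
  intro y
  have hdet : IsUnit H.det := (isUnit_iff_isUnit_det H).mp hH.isUnit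
  have hconj (B : Matrix (Fin n) (Fin n) ℝ) (x : Fin n → ℝ) :
      x ⬝ᵥ (H * B * H) *ᵥ x = H *ᵥ x ⬝ᵥ B *ᵥ (H *ᵥ x) := by
    rw [← dotProduct_mulVec_transpose_mul_mul, hHsymm.eq]
  have hHT : H * (1 - M * H) = H * (H⁻¹ - M) * H := by
    rw [Matrix.mul_sub, Matrix.mul_sub, Matrix.sub_mul, mul_nonsing_inv H hdet, Matrix.mul_one,
      Matrix.one_mul, Matrix.mul_assoc]
  have hsymm : (H * (1 - M * H)).IsSymm := by
    simp only [IsSymm, transpose_mul, transpose_sub, hHsymm.eq, hMsymm.eq, Matrix.mul_sub,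
      Matrix.mul_one, Matrix.mul_assoc]
  have hbound (x : Fin n → ℝ) :
      |x ⬝ᵥ (H * (1 - M * H)) *ᵥ x| ≤ τ * (x ⬝ᵥ H *ᵥ x) := by
    have hQ : x ⬝ᵥ H *ᵥ x = H *ᵥ x ⬝ᵥ H⁻¹ *ᵥ (H *ᵥ x) := by
      rw [← hconj, mul_nonsing_inv H hdet, Matrix.one_mul]
    rw [hHT, hconj, hQ, sub_mulVec, dotProduct_sub]
    exact abs_sub_dotProduct_mulVec_le hlow hup _
  calc _ ≤ Real.sqrt (τ ^ 2 * (y ⬝ᵥ H *ᵥ y)) :=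
        Real.sqrt_le_sqrt (mulVec_dotProduct_mulVec_le_of_abs_le hsymm hτ hbound y)
    _ = τ * Real.sqrt (y ⬝ᵥ H *ᵥ y) := by rw [Real.sqrt_mul (sq_nonneg τ), Real.sqrt_sq hτ]
end

section
/- Let X be symmetric positive definite, u a vector, τ ∈ [0, 1/5), and M a symmetric matrix with (1−τ)X⁻¹ ⪯ M ⪯ (1+τ)X⁻¹. Define Z := M − (M u uᵀ M)/(1 + uᵀ M u). Then (1−5τ)(X + uuᵀ)⁻¹ ⪯ Z ⪯ (1+5τ)(X + uuᵀ)⁻¹. -/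
/-!
By Sherman–Morrison, `Z = (M⁻¹ + uuᵀ)⁻¹`. Inverting `(1 - τ)X⁻¹ ⪯ M ⪯ (1 + τ)X⁻¹` gives
`(1 + τ)⁻¹X ⪯ M⁻¹ ⪯ (1 - τ)⁻¹X`; since `(1 + τ)⁻¹ ≤ 1 ≤ (1 - τ)⁻¹`, adding `uuᵀ` keeps
`(1 + τ)⁻¹(X + uuᵀ) ⪯ M⁻¹ + uuᵀ ⪯ (1 - τ)⁻¹(X + uuᵀ)`, and inverting once more yields
`(1 - τ)(X + uuᵀ)⁻¹ ⪯ Z ⪯ (1 + τ)(X + uuᵀ)⁻¹`, which is stronger than the claim.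
-/

open Matrix
open scoped MatrixOrder ComplexOrder

namespace Matrix

variable {ι K : Type*}

theorem smul_le_smul_of_nonneg_right {A : Matrix ι ι ℝ} {a b : ℝ} (hab : a ≤ b) (hA : 0 ≤ A) :
    a • A ≤ b • A := by
  rw [le_iff, ← sub_smul]
  exact hA.posSemidef.smul (sub_nonneg.mpr hab)

variable [Fintype ι]

theorem vecMulVec_mul_mul_vecMulVec [CommRing K] (u v : ι → K) (M : Matrix ι ι K) :
    vecMulVec u v * M * vecMulVec u v = (v ⬝ᵥ M *ᵥ u) • vecMulVec u v := by
  rw [vecMulVec_mul, vecMulVec_mul_vecMulVec, ← dotProduct_mulVec, vecMulVec_smul]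

variable [DecidableEq ι]

/-- The Sherman–Morrison formula. -/
theorem inv_add_vecMulVec [Field K] {M : Matrix ι ι K} (hM : IsUnit M) (u v : ι → K)
    (hs : 1 + v ⬝ᵥ M *ᵥ u ≠ 0) :
    (M⁻¹ + vecMulVec u v)⁻¹ = M - (1 / (1 + v ⬝ᵥ M *ᵥ u)) • (M * vecMulVec u v * M) := by
  refine inv_eq_left_inv ?_
  have hMM : M * M⁻¹ = 1 := mul_nonsing_inv M ((isUnit_iff_isUnit_det M).mp hM)
  have key : M * vecMulVec u v * M * vecMulVec u v = (v ⬝ᵥ M *ᵥ u) • (M * vecMulVec u v) := by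
    rw [mul_assoc M, mul_assoc M, vecMulVec_mul_mul_vecMulVec, mul_smul_comm]
  rw [sub_mul, mul_add, mul_add, hMM, smul_mul_assoc, smul_mul_assoc, mul_assoc _ M, hMM, mul_one,
    key, smul_smul, ← add_smul, ← mul_one_add, one_div_mul_cancel hs, one_smul,
    add_sub_cancel_right]

theorem inv_smul₀ [Field K] {c : K} (hc : c ≠ 0) {A : Matrix ι ι K} (hA : IsUnit A.det) :
    (c • A)⁻¹ = c⁻¹ • A⁻¹ :=
  inv_eq_left_inv (by rw [smul_mul_smul_comm, inv_mul_cancel₀ hc, nonsing_inv_mul A hA, one_smul])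

theorem PosDef.inv_le_inv {𝕜 : Type*} [RCLike 𝕜] {A B : Matrix ι ι 𝕜} (hA : A.PosDef)
    (hAB : A ≤ B) : B⁻¹ ≤ A⁻¹ := by
  have hB : B.PosDef := by simpa using hA.add_posSemidef (le_iff.mp hAB)
  have := hB.isUnit.invertible
  have := hA.inv.isUnit.invertible
  -- both Schur complements of `fromBlocks B 1 1 A⁻¹` decide its positivity
  have h₁ := PosDef.fromBlocks₁₁ (1 : Matrix ι ι 𝕜) A⁻¹ hB
  have h₂ := PosDef.fromBlocks₂₂ B (1 : Matrix ι ι 𝕜) hA.inv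
  rw [conjTranspose_one, one_mul, mul_one] at h₁ h₂
  rw [nonsing_inv_nonsing_inv A ((isUnit_iff_isUnit_det A).mp hA.isUnit)] at h₂
  exact h₁.mp (h₂.mpr hAB)

section Real

variable {X M U : Matrix ι ι ℝ}

theorem inv_le_smul_of_smul_inv_le (hX : X.PosDef) {c : ℝ} (hc : 0 < c) (hM : c • X⁻¹ ≤ M) :
    M⁻¹ ≤ c⁻¹ • X := by
  simpa [inv_smul₀ hc.ne' hX.inv.det_pos.ne'.isUnit,
    nonsing_inv_nonsing_inv X hX.det_pos.ne'.isUnit]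
    using (hX.inv.smul hc).inv_le_inv hM

theorem smul_inv_le_inv_of_le_smul_inv (hX : X.PosDef) (hM : M.PosDef) {c : ℝ} (hc : 0 < c)
    (hMX : M ≤ c • X⁻¹) : c⁻¹ • X ≤ M⁻¹ := by
  simpa [inv_smul₀ hc.ne' hX.inv.det_pos.ne'.isUnit,
    nonsing_inv_nonsing_inv X hX.det_pos.ne'.isUnit]
    using hM.inv_le_inv hMX

theorem smul_inv_add_le_inv_inv_add (hX : X.PosDef) (hU : 0 ≤ U) {c : ℝ} (hc₀ : 0 < c)
    (hc₁ : c ≤ 1) (hM : c • X⁻¹ ≤ M) : c • (X + U)⁻¹ ≤ (M⁻¹ + U)⁻¹ := by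
  have hMpos : M.PosDef := by
    simpa using (hX.inv.smul hc₀).add_posSemidef (le_iff.mp hM)
  have hU_le : U ≤ c⁻¹ • U := by
    simpa using smul_le_smul_of_nonneg_right (one_le_inv₀ hc₀ |>.mpr hc₁) hU
  have hle : M⁻¹ + U ≤ c⁻¹ • (X + U) := by
    rw [smul_add]
    exact add_le_add (inv_le_smul_of_smul_inv_le hX hc₀ hM) hU_le
  have h := (hMpos.inv.add_posSemidef hU.posSemidef).inv_le_inv hle
  rwa [inv_smul₀ (inv_ne_zero hc₀.ne') (hX.add_posSemidef hU.posSemidef).det_pos.ne'.isUnit,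
    inv_inv] at h

theorem inv_inv_add_le_smul_inv_add (hX : X.PosDef) (hM : M.PosDef) (hU : 0 ≤ U) {c : ℝ}
    (hc : 1 ≤ c) (hMX : M ≤ c • X⁻¹) : (M⁻¹ + U)⁻¹ ≤ c • (X + U)⁻¹ := by
  have hc₀ : 0 < c := zero_lt_one.trans_le hc
  have hU_le : c⁻¹ • U ≤ U := by
    simpa using smul_le_smul_of_nonneg_right (inv_le_one_of_one_le₀ hc) hU
  have hle : c⁻¹ • (X + U) ≤ M⁻¹ + U := by
    rw [smul_add]
    exact add_le_add (smul_inv_le_inv_of_le_smul_inv hX hM hc₀ hMX) hU_le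
  have h := ((hX.add_posSemidef hU.posSemidef).smul (inv_pos.mpr hc₀)).inv_le_inv hle
  rwa [inv_smul₀ (inv_ne_zero hc₀.ne') (hX.add_posSemidef hU.posSemidef).det_pos.ne'.isUnit,
    inv_inv] at h

end Real

end Matrix

theorem rank_one_more_approx_general (n : ℕ) (X M : Matrix (Fin n) (Fin n) ℝ)
    (hX : X.PosDef)
    (τ : ℝ) (hτ0 : 0 ≤ τ) (hτ : τ < 1 / 5) (u : Fin n → ℝ)
    (hlow : (M - (1 - τ) • X⁻¹).PosSemidef)
    (hup : ((1 + τ) • X⁻¹ - M).PosSemidef) :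
    ((M - (1 / (1 + u ⬝ᵥ M.mulVec u)) • (M * vecMulVec u u * M)) -
        (1 - 5 * τ) • (X + vecMulVec u u)⁻¹).PosSemidef ∧
    ((1 + 5 * τ) • (X + vecMulVec u u)⁻¹ -
        (M - (1 / (1 + u ⬝ᵥ M.mulVec u)) • (M * vecMulVec u u * M))).PosSemidef := by
  have hU : 0 ≤ vecMulVec u u := by simpa using (posSemidef_vecMulVec_self_star u).nonneg
  have hM : M.PosDef := by
    simpa using (hX.inv.smul (by linarith : (0 : ℝ) < 1 - τ)).add_posSemidef hlow
  have hs : 0 ≤ u ⬝ᵥ M *ᵥ u := by simpa using hM.posSemidef.dotProduct_mulVec_nonneg u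
  have hYinv : 0 ≤ (X + vecMulVec u u)⁻¹ := (hX.add_posSemidef hU.posSemidef).inv.posSemidef.nonneg
  rw [← inv_add_vecMulVec hM.isUnit u u (by positivity)]
  constructor
  · change (1 - 5 * τ) • (X + vecMulVec u u)⁻¹ ≤ (M⁻¹ + vecMulVec u u)⁻¹
    calc (1 - 5 * τ) • (X + vecMulVec u u)⁻¹ ≤ (1 - τ) • (X + vecMulVec u u)⁻¹ :=
          Matrix.smul_le_smul_of_nonneg_right (by linarith) hYinv
      _ ≤ _ := smul_inv_add_le_inv_inv_add hX hU (by linarith) (by linarith) hlow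
  · change (M⁻¹ + vecMulVec u u)⁻¹ ≤ (1 + 5 * τ) • (X + vecMulVec u u)⁻¹
    calc (M⁻¹ + vecMulVec u u)⁻¹ ≤ (1 + τ) • (X + vecMulVec u u)⁻¹ :=
          inv_inv_add_le_smul_inv_add hX hM hU (by linarith) hup
      _ ≤ (1 + 5 * τ) • (X + vecMulVec u u)⁻¹ :=
          Matrix.smul_le_smul_of_nonneg_right (by linarith) hYinv

/-- Rank-one update of an approximate inverse: if `(1−τ)X⁻¹ ⪯ M ⪯ (1+τ)X⁻¹` with
`τ ∈ [0, 1/5)`, then `Z := M − (M u uᵀ M)/(1 + uᵀ M u)` satisfies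
`(1−5τ)(X + uuᵀ)⁻¹ ⪯ Z ⪯ (1+5τ)(X + uuᵀ)⁻¹`. -/
theorem rank_one_more_approx (n : ℕ) (X M : Matrix (Fin n) (Fin n) ℝ)
    (hXsymm : X.IsSymm) (hX : X.PosDef) (hMsymm : M.IsSymm)
    (τ : ℝ) (hτ0 : 0 ≤ τ) (hτ : τ < 1 / 5) (u : Fin n → ℝ)
    (hlow : (M - (1 - τ) • X⁻¹).PosSemidef)
    (hup : ((1 + τ) • X⁻¹ - M).PosSemidef) :
    ((M - (1 / (1 + u ⬝ᵥ M.mulVec u)) • (M * vecMulVec u u * M)) -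
        (1 - 5 * τ) • (X + vecMulVec u u)⁻¹).PosSemidef ∧
    ((1 + 5 * τ) • (X + vecMulVec u u)⁻¹ -
        (M - (1 / (1 + u ⬝ᵥ M.mulVec u)) • (M * vecMulVec u u * M))).PosSemidef :=
  rank_one_more_approx_general n X M hX τ hτ0 hτ u hlow hup
end

section
/- Let X be symmetric positive definite, τ ∈ [0,1), u a vector, and M symmetric with (1−τ)X⁻¹ ⪯ M ⪯ (1+τ)X⁻¹. Then |1/(1 + uᵀMu) − 1/(1 + uᵀX⁻¹u)| ≤ (τ/(1−τ)) · 1/(1 + uᵀX⁻¹u). -/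
open Matrix

theorem Matrix.PosSemidef.dotProduct_mulVec_le_of_sub {ι R : Type*} [Fintype ι] [Ring R]
    [PartialOrder R] [StarRing R] [IsOrderedAddMonoid R] {A B : Matrix ι ι R}
    (h : (A - B).PosSemidef) (x : ι → R) :
    star x ⬝ᵥ (B *ᵥ x) ≤ star x ⬝ᵥ (A *ᵥ x) := by
  simpa [sub_mulVec, dotProduct_sub] using h.dotProduct_mulVec_nonneg x

theorem abs_one_div_one_add_sub_le {a b τ : ℝ} (ha : 0 ≤ a) (hτ0 : 0 ≤ τ) (hτ : τ < 1)
    (hlow : (1 - τ) * a ≤ b) (hup : b ≤ (1 + τ) * a) :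
    |1 / (1 + b) - 1 / (1 + a)| ≤ τ / (1 - τ) * (1 / (1 + a)) := by
  have hA : 0 < 1 + a := by linarith
  have hτ1 : 0 < 1 - τ := by linarith
  have hB : (1 - τ) * (1 + a) ≤ 1 + b := by nlinarith
  have hBpos : 0 < 1 + b := by nlinarith
  have hdiff : |a - b| ≤ τ * (1 + a) := by rw [abs_le]; constructor <;> nlinarith
  calc |1 / (1 + b) - 1 / (1 + a)| = |a - b| * (1 / (1 + a)) * (1 / (1 + b)) := by
        rw [show 1 / (1 + b) - 1 / (1 + a) = (a - b) * (1 / (1 + a)) * (1 / (1 + b)) by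
            field_simp; ring, abs_mul, abs_mul, abs_of_pos (by positivity : 0 < 1 / (1 + a)),
          abs_of_pos (by positivity : 0 < 1 / (1 + b))]
    _ ≤ τ * (1 + a) * (1 / (1 + a)) * (1 / ((1 - τ) * (1 + a))) := by gcongr
    _ = τ / (1 - τ) * (1 / (1 + a)) := by field_simp

theorem denom_approx_general (n : ℕ) (X M : Matrix (Fin n) (Fin n) ℝ)
    (hX : X.PosDef)
    (τ : ℝ) (hτ0 : 0 ≤ τ) (hτ : τ < 1) (u : Fin n → ℝ)
    (hlow : (M - (1 - τ) • X⁻¹).PosSemidef)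
    (hup : ((1 + τ) • X⁻¹ - M).PosSemidef) :
    |1 / (1 + u ⬝ᵥ M.mulVec u) - 1 / (1 + u ⬝ᵥ X⁻¹.mulVec u)| ≤
      (τ / (1 - τ)) * (1 / (1 + u ⬝ᵥ X⁻¹.mulVec u)) := by
  have hnonneg := hX.inv.posSemidef.dotProduct_mulVec_nonneg u
  have hle_low := hlow.dotProduct_mulVec_le_of_sub u
  have hle_up := hup.dotProduct_mulVec_le_of_sub u
  simp only [star_trivial, smul_mulVec, dotProduct_smul, smul_eq_mul] at hnonneg hle_low hle_up
  exact abs_one_div_one_add_sub_le hnonneg hτ0 hτ hle_low hle_up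

/-- If `(1−τ)X⁻¹ ⪯ M ⪯ (1+τ)X⁻¹` with `τ ∈ [0,1)`, then
`|1/(1 + uᵀMu) − 1/(1 + uᵀX⁻¹u)| ≤ (τ/(1−τ)) · 1/(1 + uᵀX⁻¹u)`. -/
theorem denom_approx (n : ℕ) (X M : Matrix (Fin n) (Fin n) ℝ)
    (hXsymm : X.IsSymm) (hX : X.PosDef) (hMsymm : M.IsSymm)
    (τ : ℝ) (hτ0 : 0 ≤ τ) (hτ : τ < 1) (u : Fin n → ℝ)
    (hlow : (M - (1 - τ) • X⁻¹).PosSemidef)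
    (hup : ((1 + τ) • X⁻¹ - M).PosSemidef) :
    |1 / (1 + u ⬝ᵥ M.mulVec u) - 1 / (1 + u ⬝ᵥ X⁻¹.mulVec u)| ≤
      (τ / (1 - τ)) * (1 / (1 + u ⬝ᵥ X⁻¹.mulVec u)) :=
  denom_approx_general n X M hX τ hτ0 hτ u hlow hup
end

section
/- The function f(x,t) = −log(t^{2/p} − x²) − 2 log t, defined on the domain {(x,t) ∈ ℝ² : |x|^p < t}, is a convex function for every constant p ≥ 1. -/
open Set Real

private lemma combo_pos {a b x y : ℝ} (ha : 0 ≤ a) (hb : 0 ≤ b) (hab : a + b = 1)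
    (hx : 0 < x) (hy : 0 < y) : 0 < a * x + b * y := by
  rcases ha.eq_or_lt with ha' | ha'
  · have hb1 : b = 1 := by linarith
    simp [← ha', hb1, hy]
  · have h1 : 0 ≤ b * y := mul_nonneg hb hy.le
    nlinarith [mul_pos ha' hx]

private lemma convexOn_neg_log_comp {E : Type*} [AddCommGroup E] [Module ℝ E]
    {s : Set E} {g : E → ℝ} (hs : Convex ℝ s) (hg : ConcaveOn ℝ s g)
    (hpos : ∀ x ∈ s, 0 < g x) :
    ConvexOn ℝ s (fun x => -Real.log (g x)) := by
  refine ⟨hs, fun x hx y hy a b ha hb hab => ?_⟩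
  simp only [smul_eq_mul]
  have h1 : a • g x + b • g y ≤ g (a • x + b • y) := hg.2 hx hy ha hb hab
  simp only [smul_eq_mul] at h1
  have hx0 := hpos x hx
  have hy0 := hpos y hy
  have hcomb : 0 < a * g x + b * g y := combo_pos ha hb hab hx0 hy0
  have hlog1 : Real.log (a * g x + b * g y) ≤ Real.log (g (a • x + b • y)) :=
    Real.log_le_log hcomb h1
  have hlog2 : a * Real.log (g x) + b * Real.log (g y) ≤ Real.log (a * g x + b * g y) := by
    have := strictConcaveOn_log_Ioi.concaveOn.2 (mem_Ioi.2 hx0) (mem_Ioi.2 hy0) ha hb hab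
    simpa using this
  linarith

/-- The barrier function `f(x,t) = −log(t^{2/p} − x²) − 2 log t` is convex on the
domain `{(x,t) : |x|^p < t}` for every real constant `p ≥ 1`. -/
theorem barrier_convex (p : ℝ) (hp : 1 ≤ p) :
    ConvexOn ℝ {q : ℝ × ℝ | |q.1| ^ p < q.2}
      (fun q : ℝ × ℝ => -Real.log (q.2 ^ (2 / p) - q.1 ^ 2) - 2 * Real.log q.2) := by
  have hp0 : (0:ℝ) < p := lt_of_lt_of_le one_pos hp
  have hpinv0 : (0:ℝ) < p⁻¹ := by positivity
  have hpinv1 : p⁻¹ ≤ 1 := by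
    rw [← inv_one]
    exact (inv_anti₀ one_pos hp)
  set S : Set (ℝ × ℝ) := {q : ℝ × ℝ | |q.1| ^ p < q.2} with hS
  -- basic facts on S
  have ht : ∀ q ∈ S, (0:ℝ) < q.2 := fun q hq =>
    lt_of_le_of_lt (Real.rpow_nonneg (abs_nonneg _) p) hq
  have habs : ∀ q ∈ S, |q.1| < q.2 ^ p⁻¹ := by
    intro q hq
    have h1 : (|q.1| ^ p) ^ p⁻¹ < q.2 ^ p⁻¹ :=
      Real.rpow_lt_rpow (Real.rpow_nonneg (abs_nonneg _) p) hq hpinv0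
    rwa [← Real.rpow_mul (abs_nonneg _), mul_inv_cancel₀ hp0.ne', Real.rpow_one] at h1
  -- convexity of S
  have hSconv : Convex ℝ S := by
    intro q1 hq1 q2 hq2 a b ha hb hab
    simp only [hS, Set.mem_setOf_eq] at hq1 hq2 ⊢
    simp only [Prod.fst_add, Prod.snd_add, Prod.smul_fst, Prod.smul_snd, smul_eq_mul]
    have h1 : |a * q1.1 + b * q2.1| ≤ a * |q1.1| + b * |q2.1| := by
      calc |a * q1.1 + b * q2.1| ≤ |a * q1.1| + |b * q2.1| := abs_add_le _ _
        _ = a * |q1.1| + b * |q2.1| := by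
            rw [abs_mul, abs_mul, abs_of_nonneg ha, abs_of_nonneg hb]
    have h2 : |a * q1.1 + b * q2.1| ^ p ≤ (a * |q1.1| + b * |q2.1|) ^ p :=
      Real.rpow_le_rpow (abs_nonneg _) h1 hp0.le
    have h3 : (a * |q1.1| + b * |q2.1|) ^ p ≤ a * |q1.1| ^ p + b * |q2.1| ^ p := by
      have := (convexOn_rpow hp).2 (Set.mem_Ici.2 (abs_nonneg q1.1))
        (Set.mem_Ici.2 (abs_nonneg q2.1)) ha hb hab
      simpa using this
    have h4 : 0 < a * (q1.2 - |q1.1| ^ p) + b * (q2.2 - |q2.1| ^ p) :=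
      combo_pos ha hb hab (sub_pos.2 hq1) (sub_pos.2 hq2)
    nlinarith
  -- concavity of the two factor functions
  have hrpow_conc : ∀ x ∈ S, ∀ y ∈ S, ∀ a b : ℝ, 0 ≤ a → 0 ≤ b → a + b = 1 →
      a * x.2 ^ p⁻¹ + b * y.2 ^ p⁻¹ ≤ (a * x.2 + b * y.2) ^ p⁻¹ := by
    intro x hx y hy a b ha hb hab
    have := (Real.concaveOn_rpow hpinv0.le hpinv1).2
      (Set.mem_Ici.2 (ht x hx).le) (Set.mem_Ici.2 (ht y hy).le) ha hb hab
    simpa using this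
  have hconc1 : ConcaveOn ℝ S (fun q : ℝ × ℝ => q.2 ^ p⁻¹ - q.1) := by
    refine ⟨hSconv, fun x hx y hy a b ha hb hab => ?_⟩
    simp only [Prod.fst_add, Prod.snd_add, Prod.smul_fst, Prod.smul_snd, smul_eq_mul]
    have := hrpow_conc x hx y hy a b ha hb hab
    linarith
  have hconc2 : ConcaveOn ℝ S (fun q : ℝ × ℝ => q.2 ^ p⁻¹ + q.1) := by
    refine ⟨hSconv, fun x hx y hy a b ha hb hab => ?_⟩
    simp only [Prod.fst_add, Prod.snd_add, Prod.smul_fst, Prod.smul_snd, smul_eq_mul]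
    have := hrpow_conc x hx y hy a b ha hb hab
    linarith
  have hconc3 : ConcaveOn ℝ S (fun q : ℝ × ℝ => q.2) := by
    refine ⟨hSconv, fun x hx y hy a b ha hb hab => ?_⟩
    simp only [Prod.snd_add, Prod.smul_snd, smul_eq_mul]
    exact le_refl _
  -- the three convex pieces
  have hcv1 : ConvexOn ℝ S (fun q : ℝ × ℝ => -Real.log (q.2 ^ p⁻¹ - q.1)) :=
    convexOn_neg_log_comp hSconv hconc1
      (fun q hq => sub_pos.2 (lt_of_le_of_lt (le_abs_self _) (habs q hq)))
  have hcv2 : ConvexOn ℝ S (fun q : ℝ × ℝ => -Real.log (q.2 ^ p⁻¹ + q.1)) :=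
    convexOn_neg_log_comp hSconv hconc2
      (fun q hq => by nlinarith [habs q hq, neg_abs_le q.1])
  have hcv3 : ConvexOn ℝ S (fun q : ℝ × ℝ => -Real.log q.2) :=
    convexOn_neg_log_comp hSconv hconc3 ht
  have hsum : ConvexOn ℝ S (fun q : ℝ × ℝ =>
      (-Real.log (q.2 ^ p⁻¹ - q.1) + -Real.log (q.2 ^ p⁻¹ + q.1)) +
        ((-Real.log q.2) + (-Real.log q.2))) :=
    ((hcv1.add hcv2).add (hcv3.add hcv3))
  refine hsum.congr fun q hq => ?_
  -- the two expressions agree on S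
  have ht0 := ht q hq
  have hsub : 0 < q.2 ^ p⁻¹ - q.1 := sub_pos.2 (lt_of_le_of_lt (le_abs_self _) (habs q hq))
  have hadd : 0 < q.2 ^ p⁻¹ + q.1 := by nlinarith [habs q hq, neg_abs_le q.1]
  have hsq : q.2 ^ (2 / p) = (q.2 ^ p⁻¹) ^ 2 := by
    rw [← Real.rpow_natCast (q.2 ^ p⁻¹) 2, ← Real.rpow_mul ht0.le]
    norm_num
    ring_nf
  have hfactor : q.2 ^ (2 / p) - q.1 ^ 2 = (q.2 ^ p⁻¹ - q.1) * (q.2 ^ p⁻¹ + q.1) := by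
    rw [hsq]; ring
  rw [hfactor, Real.log_mul hsub.ne' hadd.ne']
  ring
end

section
/- Let G(V,E) be a DAG with observations y ∈ ℝ^V and weights w > 0. Construct G' by adding, for each u ∈ V, vertices u_L, u_R and edges (u_L, u) and (u, u_R) with lengths 1/w(u), while all edges of E get length 0; set partial labels y'(u_L) = y'(u_R) = y(u) and y'(u) unlabeled. Then for any complete labeling x extending y' with x|_V isotonic on G, the maximal gradient max_{(a,b)∈E(G')} grad⁺[x](a,b) equals ‖x|_V − y‖_{w,∞} = max_{u∈V} w(u)·|x(u) − y(u)|. -/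
/-- In the reduction graph `G'` (vertices `V ⊕ V_L ⊕ V_R`, encoded as
`Sum.inl u` for `u ∈ V`, `Sum.inr (Sum.inl u)` for `u_L`, `Sum.inr (Sum.inr u)` for
`u_R`; edges `(u_L,u)` and `(u,u_R)` of length `1/w(u)`, original edges of length `0`):
for any complete labeling `x` extending `y'` whose restriction to `V` is isotonic,
the maximal edge gradient equals `‖x|_V − y‖_{w,∞} = max_u w(u)·|x(u) − y(u)|`.
(Zero-length edges contribute gradient `0` since `x|_V` is isotonic.) -/
theorem reduction_max_gradient (V : Type) [Fintype V] [Nonempty V]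
    (E : Set (V × V)) (y : V → ℝ) (w : V → ℝ) (hw : ∀ u, 0 < w u)
    (x : V ⊕ V ⊕ V → ℝ)
    (hxL : ∀ u, x (Sum.inr (Sum.inl u)) = y u)
    (hxR : ∀ u, x (Sum.inr (Sum.inr u)) = y u)
    (hiso : ∀ e ∈ E, x (Sum.inl e.1) ≤ x (Sum.inl e.2)) :
    IsGreatest
      {g : ℝ | (∃ e ∈ E, g = 0) ∨
        (∃ u : V, g = max ((x (Sum.inr (Sum.inl u)) - x (Sum.inl u)) * w u) 0) ∨
        (∃ u : V, g = max ((x (Sum.inl u) - x (Sum.inr (Sum.inr u))) * w u) 0)}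
      (Finset.univ.sup' Finset.univ_nonempty
        (fun u : V => w u * |x (Sum.inl u) - y u|)) := by
  classical
  set f : V → ℝ := fun u => w u * |x (Sum.inl u) - y u| with hf
  obtain ⟨u₀, -, hu₀⟩ := Finset.exists_mem_eq_sup' Finset.univ_nonempty f
  constructor
  · rw [hu₀]
    rcases le_total (x (Sum.inl u₀)) (y u₀) with h | h
    · refine Or.inr (Or.inl ⟨u₀, ?_⟩)
      simp only [f, hxL, abs_of_nonpos (sub_nonpos.2 h)]
      rw [max_eq_left (by nlinarith [(hw u₀).le])]
      ring
    · refine Or.inr (Or.inr ⟨u₀, ?_⟩)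
      simp only [f, hxR, abs_of_nonneg (sub_nonneg.2 h)]
      rw [max_eq_left (by nlinarith [(hw u₀).le])]
      ring
  · rintro g (⟨e, -, rfl⟩ | ⟨u, rfl⟩ | ⟨u, rfl⟩)
    · exact le_trans (mul_nonneg (hw (Classical.arbitrary V)).le (abs_nonneg _))
        (Finset.le_sup' f (Finset.mem_univ _))
    · refine max_le ?_ (le_trans (mul_nonneg (hw u).le (abs_nonneg _))
        (Finset.le_sup' f (Finset.mem_univ u)))
      refine le_trans ?_ (Finset.le_sup' f (Finset.mem_univ u))
      simp only [f, hxL]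
      have := abs_sub_abs_le_abs_sub (y u) (x (Sum.inl u))
      nlinarith [(hw u).le, le_abs_self (y u - x (Sum.inl u)), abs_nonneg (x (Sum.inl u) - y u), abs_sub_comm (y u) (x (Sum.inl u))]
    · refine max_le ?_ (le_trans (mul_nonneg (hw u).le (abs_nonneg _))
        (Finset.le_sup' f (Finset.mem_univ u)))
      refine le_trans ?_ (Finset.le_sup' f (Finset.mem_univ u))
      simp only [f, hxR]
      nlinarith [(hw u).le, le_abs_self (x (Sum.inl u) - y u)]
end

section
/- Let G(V,E) be a DAG, y ∈ ℝ^V, w > 0, and let G', y' be the reduction graph as above. Then x* ∈ I_G minimizes ‖x − y‖_{w,∞} over I_G if and only if some complete labeling of G' extending y' and restricting to x* on V is an inf-minimizer of the partially labeled DAG (G', y'). -/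
/-!
On a labeling of `G'` extending `y'`, the two auxiliary edges at `u` contribute
`w u * max (y u - x u) (x u - y u) = w u * |x u - y u|`, while the zero-length edges contribute
`0` if the restriction `x` to `V` is isotonic and `∞` otherwise. So the objective of `(G', y')`
is `‖x - y‖_{w,∞}` on isotonic `x` and `∞` elsewhere, and since constant labelings are isotonic,
its minimizers are exactly the isotonic minimizers of `‖x - y‖_{w,∞}`.
-/

open scoped ENNReal

/-- The objective of the Lipschitz-learning instance on the reduction graph `G'`:
the maximum gradient over all edges, valued in `ℝ≥0∞`.  Zero-length original edges
contribute `0` when non-decreasing and `⊤` otherwise; the auxiliary edges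
`(u_L, u)` and `(u, u_R)` have length `1/w(u)`. -/
noncomputable def reductionObj {V : Type} (E : Set (V × V)) (w : V → ℝ)
    (z : V ⊕ V ⊕ V → ℝ) : ℝ≥0∞ :=
  (⨆ e ∈ E, if z (Sum.inl e.1) ≤ z (Sum.inl e.2) then 0 else (⊤ : ℝ≥0∞)) ⊔
  (⨆ u : V, ENNReal.ofReal ((z (Sum.inr (Sum.inl u)) - z (Sum.inl u)) * w u)) ⊔
  (⨆ u : V, ENNReal.ofReal ((z (Sum.inl u) - z (Sum.inr (Sum.inr u))) * w u))

theorem constrained_min_iff_penalized_min {α : Type*} {P : α → Prop} [DecidablePred P]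
    {d : α → ℝ} (hd : ∀ b, 0 ≤ d b) (hP : ∃ b, P b) (a : α) :
    (P a ∧ ∀ b, P b → d a ≤ d b) ↔
      ∀ b, (if P a then ENNReal.ofReal (d a) else ⊤) ≤
        if P b then ENNReal.ofReal (d b) else ⊤ := by
  constructor
  · rintro ⟨ha, hmin⟩ b
    rw [if_pos ha]
    split_ifs with hb
    · exact ENNReal.ofReal_le_ofReal (hmin b hb)
    · exact le_top
  · intro h
    obtain ⟨b₀, hb₀⟩ := hP
    have ha : P a := by
      by_contra ha
      simpa [ha, hb₀] using h b₀
    refine ⟨ha, fun b hb => ?_⟩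
    simpa [ha, hb, ENNReal.ofReal_le_ofReal_iff (hd b)] using h b

noncomputable def weightedSupDist {V : Type*} [Fintype V] [Nonempty V] (w x y : V → ℝ) : ℝ :=
  Finset.univ.sup' Finset.univ_nonempty fun u => w u * |x u - y u|

theorem weightedSupDist_nonneg {V : Type*} [Fintype V] [Nonempty V] {w : V → ℝ}
    (hw : ∀ u, 0 ≤ w u) (x y : V → ℝ) : 0 ≤ weightedSupDist w x y :=
  Finset.le_sup'_of_le _ (Finset.mem_univ (Classical.arbitrary V))
    (mul_nonneg (hw _) (abs_nonneg _))

theorem iSup_mem_ite_zero_top {V α : Type*} [LinearOrder α] (E : Set (V × V)) (x : V → α)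
    [Decidable (∀ e ∈ E, x e.1 ≤ x e.2)] :
    (⨆ e ∈ E, if x e.1 ≤ x e.2 then 0 else (⊤ : ℝ≥0∞)) =
      if ∀ e ∈ E, x e.1 ≤ x e.2 then 0 else ⊤ := by
  split_ifs with hmono
  · exact le_antisymm (iSup₂_le fun e he => by simp [hmono e he]) bot_le
  · push Not at hmono
    obtain ⟨e, he, hlt⟩ := hmono
    exact top_unique (le_iSup₂_of_le e he (by simp [not_le.2 hlt]))

theorem iSup_ofReal_sub_mul_sup_eq {V : Type*} [Fintype V] [Nonempty V] {w : V → ℝ}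
    (hw : ∀ u, 0 ≤ w u) (x y : V → ℝ) :
    (⨆ u, ENNReal.ofReal ((y u - x u) * w u)) ⊔ (⨆ u, ENNReal.ofReal ((x u - y u) * w u)) =
      ENNReal.ofReal (weightedSupDist w x y) := by
  rw [← iSup_sup_eq, weightedSupDist,
    Finset.apply_sup'_eq_sup'_comp _ _ ENNReal.ofReal_max, Finset.sup'_univ_eq_ciSup]
  refine iSup_congr fun u => ?_
  rw [Function.comp_apply, ← ENNReal.ofReal_max, ← max_mul_of_nonneg _ _ (hw u), mul_comm,
    ← neg_sub, max_comm, ← abs_eq_max_neg]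

open Classical in
theorem reductionObj_eq_ite {V : Type} [Fintype V] [Nonempty V] (E : Set (V × V))
    {w : V → ℝ} (hw : ∀ u, 0 ≤ w u) {y : V → ℝ} {z : V ⊕ V ⊕ V → ℝ}
    (hL : ∀ u, z (.inr (.inl u)) = y u) (hR : ∀ u, z (.inr (.inr u)) = y u) :
    reductionObj E w z =
      if ∀ e ∈ E, z (.inl e.1) ≤ z (.inl e.2) then
        ENNReal.ofReal (weightedSupDist w (fun u => z (.inl u)) y)
      else ⊤ := by
  rw [reductionObj, sup_assoc]
  simp only [hL, hR]
  rw [iSup_ofReal_sub_mul_sup_eq hw, iSup_mem_ite_zero_top E fun u => z (.inl u)]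
  split_ifs <;> simp

theorem linf_isotonic_iff_inf_minimizer_general (V : Type) [Fintype V] [Nonempty V]
    (E : Set (V × V))
    (y : V → ℝ) (w : V → ℝ) (hw : ∀ u, 0 < w u) (xstar : V → ℝ) :
    ((∀ e ∈ E, xstar e.1 ≤ xstar e.2) ∧
      ∀ z : V → ℝ, (∀ e ∈ E, z e.1 ≤ z e.2) →
        Finset.univ.sup' Finset.univ_nonempty (fun u : V => w u * |xstar u - y u|) ≤
          Finset.univ.sup' Finset.univ_nonempty (fun u : V => w u * |z u - y u|)) ↔
    (∃ zc : V ⊕ V ⊕ V → ℝ,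
      (∀ u, zc (Sum.inr (Sum.inl u)) = y u) ∧
      (∀ u, zc (Sum.inr (Sum.inr u)) = y u) ∧
      (∀ u, zc (Sum.inl u) = xstar u) ∧
      ∀ z' : V ⊕ V ⊕ V → ℝ, (∀ u, z' (Sum.inr (Sum.inl u)) = y u) →
        (∀ u, z' (Sum.inr (Sum.inr u)) = y u) →
          reductionObj E w zc ≤ reductionObj E w z') := by
  classical
  have hw' : ∀ u, 0 ≤ w u := fun u => (hw u).le
  have extend_eq (x : V → ℝ) := reductionObj_eq_ite E hw' (z := Sum.elim x (Sum.elim y y))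
    (fun _ => rfl) (fun _ => rfl)
  refine (constrained_min_iff_penalized_min (P := fun x : V → ℝ => ∀ e ∈ E, x e.1 ≤ x e.2)
    (weightedSupDist_nonneg hw' · y) ⟨0, fun _ _ => le_rfl⟩ xstar).trans ⟨fun h => ?_, ?_⟩
  · refine ⟨Sum.elim xstar (Sum.elim y y), fun _ => rfl, fun _ => rfl, fun _ => rfl,
      fun z hL hR => ?_⟩
    rw [extend_eq, reductionObj_eq_ite E hw' hL hR]
    exact h fun u => z (.inl u)
  · rintro ⟨zc, hL, hR, hx, hmin⟩ x
    have h := hmin (Sum.elim x (Sum.elim y y)) (fun _ => rfl) (fun _ => rfl)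
    rw [reductionObj_eq_ite E hw' hL hR, extend_eq x] at h
    simp only [hx] at h
    exact h

/-- `x*` minimizes `‖x − y‖_{w,∞}` over the isotonic set `I_G` if and only if some
complete labeling of the reduction graph `G'` extending `y'` and restricting to `x*`
on `V` is an inf-minimizer of the partially labeled DAG `(G', y')`. -/
theorem linf_isotonic_iff_inf_minimizer (V : Type) [Fintype V] [Nonempty V]
    (E : Set (V × V))
    (hacyc : ∀ v : V, ¬ Relation.TransGen (fun a b => (a, b) ∈ E) v v)
    (y : V → ℝ) (w : V → ℝ) (hw : ∀ u, 0 < w u) (xstar : V → ℝ) :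
    ((∀ e ∈ E, xstar e.1 ≤ xstar e.2) ∧
      ∀ z : V → ℝ, (∀ e ∈ E, z e.1 ≤ z e.2) →
        Finset.univ.sup' Finset.univ_nonempty (fun u : V => w u * |xstar u - y u|) ≤
          Finset.univ.sup' Finset.univ_nonempty (fun u : V => w u * |z u - y u|)) ↔
    (∃ zc : V ⊕ V ⊕ V → ℝ,
      (∀ u, zc (Sum.inr (Sum.inl u)) = y u) ∧
      (∀ u, zc (Sum.inr (Sum.inr u)) = y u) ∧
      (∀ u, zc (Sum.inl u) = xstar u) ∧
      ∀ z' : V ⊕ V ⊕ V → ℝ, (∀ u, z' (Sum.inr (Sum.inl u)) = y u) →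
        (∀ u, z' (Sum.inr (Sum.inr u)) = y u) →
          reductionObj E w zc ≤ reductionObj E w z') :=
  linf_isotonic_iff_inf_minimizer_general V E y w hw xstar
end
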